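/- With D = ζΛ, ζ = −(1+i)/√2, Λ real diagonal with strictly positive entries, and R unitary (R*R = I), the 4n×2n frames X₋ = (R R; RD² R(D*)²; RD³ R(D*)³; RD RD*) and X̃₊ = (R R; RD² R(D*)²; −RD³ −R(D*)³; −RD −RD*) satisfy X₋*JX̃₊ = [[0, 4(D*)³],[4D³, 0]], which is invertible; hence the corresponding Lagrangian subspaces intersect trivially. -/

import Mathlib

open Matrix

/-!
Write `X₋ = (A; B)` and `X̃₊ = (A; -B)` with `A = (R R; RD² R(Dᴴ)²)` and `B = (RD³ R(Dᴴ)³; RD RDᴴ)`,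
so that `X₋ᴴ J X̃₊ = BᴴA + AᴴB` and `X₋ᴴ J X₋ = BᴴA - AᴴB`. Since `RᴴR = 1`, the blocks of `BᴴA` are
`a³ + a b²` with `a, b ∈ {D, Dᴴ}`; the off-diagonal ones are `a (a² + b²) = 0` because
`ζ² = i` makes `D² + (Dᴴ)² = 0`. Hence `BᴴA = [[0, 2(Dᴴ)³], [2D³, 0]]`, which is Hermitian, so
`AᴴB = BᴴA`: `X₋` is Lagrangian and `X₋ᴴ J X̃₊ = 2 BᴴA` is invertible. A vector `X₋u = X̃₊v` in both
ranges then satisfies `(X₋ᴴ J X̃₊) v = X₋ᴴ J X₋ u = 0`, so `v = 0`.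
-/

namespace Matrix

variable {R : Type*} {l m n : Type*} [Fintype n]

lemma conjTranspose_fromRows_mul_fromBlocks_mul_fromRows [Ring R] [StarRing R] [DecidableEq n]
    (A B : Matrix n m R) (P Q : Matrix n l R) :
    (fromRows A B)ᴴ * (fromBlocks 0 (-1) 1 0 : Matrix (n ⊕ n) (n ⊕ n) R) * fromRows P Q =
      Bᴴ * P - Aᴴ * Q := by
  rw [conjTranspose_fromRows_eq_fromCols_conjTranspose, Matrix.mul_assoc, fromBlocks_mul_fromRows,
    fromCols_mul_fromRows]
  simp only [Matrix.zero_mul, Matrix.neg_mul, Matrix.one_mul, zero_add, add_zero, Matrix.mul_neg]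
  abel

lemma conjTranspose_fromCols_mul_fromCols_of_conjTranspose_mul_self [Semiring R] [StarRing R]
    [Fintype m] [DecidableEq n] (S : Matrix m n R) (hS : Sᴴ * S = 1) (U V P Q : Matrix n n R) :
    (fromCols (S * U) (S * V))ᴴ * fromCols (S * P) (S * Q) =
      fromBlocks (Uᴴ * P) (Uᴴ * Q) (Vᴴ * P) (Vᴴ * Q) := by
  have hcancel (X Y : Matrix n n R) : (S * X)ᴴ * (S * Y) = Xᴴ * Y := by
    rw [conjTranspose_mul, Matrix.mul_assoc, ← Matrix.mul_assoc Sᴴ, hS, Matrix.one_mul]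
  rw [conjTranspose_fromCols_eq_fromRows_conjTranspose, fromRows_mul_fromCols, hcancel, hcancel,
    hcancel, hcancel]

lemma isUnit_fromBlocks_zero_zero [Semiring R] [DecidableEq n] {B C : Matrix n n R} (hB : IsUnit B)
    (hC : IsUnit C) : IsUnit (fromBlocks 0 B C 0) := by
  obtain ⟨u, rfl⟩ := hB
  obtain ⟨v, rfl⟩ := hC
  exact ⟨⟨fromBlocks 0 u v 0, fromBlocks 0 ↑v⁻¹ ↑u⁻¹ 0, by rw [fromBlocks_multiply]; simp,
    by rw [fromBlocks_multiply]; simp⟩, rfl⟩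

lemma range_mulVecLin_inf_eq_bot_of_mul_eq_zero [CommSemiring R] [Fintype l] [Fintype m]
    [DecidableEq n] {G : Matrix n m R} {X : Matrix m l R} {Y : Matrix m n R} (hX : G * X = 0)
    (hY : IsUnit (G * Y)) :
    LinearMap.range X.mulVecLin ⊓ LinearMap.range Y.mulVecLin = ⊥ := by
  refine eq_bot_iff.2 fun x ⟨⟨u, hu⟩, ⟨v, hv⟩⟩ => ?_
  simp only [mulVecLin_apply] at hu hv
  have hv0 : (G * Y) *ᵥ v = (G * Y) *ᵥ 0 := by
    rw [← mulVec_mulVec, hv, ← hu, mulVec_mulVec, hX, zero_mulVec, mulVec_zero]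
  rw [Submodule.mem_bot, ← hv, mulVec_injective_of_isUnit hY hv0, mulVec_zero]

end Matrix

namespace AsymptoticFrame

variable {R : Type*} [CommRing R] [StarRing R] {m n : Type*} [Fintype m] [Fintype n]
  [DecidableEq n]

def top (S : Matrix m n R) (D : Matrix n n R) : Matrix (m ⊕ m) (n ⊕ n) R :=
  fromRows (fromCols S S) (fromCols (S * D ^ 2) (S * Dᴴ ^ 2))

def bottom (S : Matrix m n R) (D : Matrix n n R) : Matrix (m ⊕ m) (n ⊕ n) R :=
  fromRows (fromCols (S * D ^ 3) (S * Dᴴ ^ 3)) (fromCols (S * D) (S * Dᴴ))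

variable {S : Matrix m n R} {D : Matrix n n R}

lemma bottom_conjTranspose_mul_top (hS : Sᴴ * S = 1) (hD : D ^ 2 + Dᴴ ^ 2 = 0) :
    (bottom S D)ᴴ * top S D = fromBlocks 0 ((2 : R) • Dᴴ ^ 3) ((2 : R) • D ^ 3) 0 := by
  have hDH : Dᴴ ^ 2 + D ^ 2 = 0 := by rw [add_comm, hD]
  have hS1 : fromCols S S = fromCols (S * (1 : Matrix n n R)) (S * (1 : Matrix n n R)) := by
    rw [Matrix.mul_one]
  unfold bottom top
  rw [conjTranspose_fromRows_eq_fromCols_conjTranspose, fromCols_mul_fromRows, hS1,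
    conjTranspose_fromCols_mul_fromCols_of_conjTranspose_mul_self S hS,
    conjTranspose_fromCols_mul_fromCols_of_conjTranspose_mul_self S hS, fromBlocks_add]
  simp only [conjTranspose_pow, conjTranspose_conjTranspose, Matrix.mul_one]
  congr 1
  · rw [pow_succ', ← mul_add, hDH, Matrix.mul_zero]
  · rw [← pow_succ', two_smul]
  · rw [← pow_succ', two_smul]
  · rw [pow_succ', ← mul_add, hD, Matrix.mul_zero]

lemma top_conjTranspose_mul_bottom (hS : Sᴴ * S = 1) (hD : D ^ 2 + Dᴴ ^ 2 = 0) :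
    (top S D)ᴴ * bottom S D = (bottom S D)ᴴ * top S D := by
  rw [← conjTranspose_conjTranspose ((top S D)ᴴ * bottom S D), conjTranspose_mul,
    conjTranspose_conjTranspose, bottom_conjTranspose_mul_top hS hD, fromBlocks_conjTranspose]
  simp only [conjTranspose_zero, conjTranspose_smul, conjTranspose_pow, conjTranspose_conjTranspose,
    star_ofNat]

lemma conjTranspose_mul_symplectic_mul_self [DecidableEq m] (hS : Sᴴ * S = 1)
    (hD : D ^ 2 + Dᴴ ^ 2 = 0) :
    (fromRows (top S D) (bottom S D))ᴴ *
      (fromBlocks 0 (-1) 1 0 : Matrix ((m ⊕ m) ⊕ (m ⊕ m)) ((m ⊕ m) ⊕ (m ⊕ m)) R) *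
      fromRows (top S D) (bottom S D) = 0 := by
  rw [conjTranspose_fromRows_mul_fromBlocks_mul_fromRows, top_conjTranspose_mul_bottom hS hD,
    sub_self]

lemma conjTranspose_mul_symplectic_mul_reflect [DecidableEq m] (hS : Sᴴ * S = 1)
    (hD : D ^ 2 + Dᴴ ^ 2 = 0) :
    (fromRows (top S D) (bottom S D))ᴴ *
      (fromBlocks 0 (-1) 1 0 : Matrix ((m ⊕ m) ⊕ (m ⊕ m)) ((m ⊕ m) ⊕ (m ⊕ m)) R) *
      fromRows (top S D) (-bottom S D) =
      fromBlocks 0 ((4 : R) • Dᴴ ^ 3) ((4 : R) • D ^ 3) 0 := by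
  rw [conjTranspose_fromRows_mul_fromBlocks_mul_fromRows, Matrix.mul_neg, sub_neg_eq_add,
    top_conjTranspose_mul_bottom hS hD, bottom_conjTranspose_mul_top hS hD, ← two_smul R,
    fromBlocks_smul, smul_zero, smul_smul, smul_smul]
  norm_num

end AsymptoticFrame

lemma isUnit_smul_diagonal {n K : Type*} [Fintype n] [DecidableEq n] [Field K] {c : K}
    {v : n → K} (hc : c ≠ 0) (hv : ∀ i, v i ≠ 0) : IsUnit (c • diagonal v) := by
  rw [← diagonal_smul, isUnit_diagonal, Pi.isUnit_iff]
  exact fun i => (mul_ne_zero hc (hv i)).isUnit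

lemma smul_sq_add_conjTranspose_smul_sq_eq_zero {n : Type*} [Fintype n] [DecidableEq n]
    {Λ : Matrix n n ℂ} (hΛ : Λ.IsHermitian) {ζ : ℂ} (hζ : (ζ ^ 2).re = 0) :
    (ζ • Λ) ^ 2 + (ζ • Λ)ᴴ ^ 2 = 0 := by
  rw [conjTranspose_smul, hΛ.eq, smul_pow, smul_pow, ← add_smul, ← star_pow, Complex.star_def,
    Complex.add_conj, hζ]
  simp

lemma neg_one_add_I_div_sqrt_two_sq : (-((1 + Complex.I) / Real.sqrt 2)) ^ 2 = Complex.I := by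
  have h2 : ((Real.sqrt 2 : ℝ) : ℂ) ^ 2 = 2 := by
    norm_cast
    exact Real.sq_sqrt zero_le_two
  rw [neg_sq, div_pow, h2, add_sq, Complex.I_sq]
  ring

/-- With `D = ζΛ`, `ζ = −(1+i)/√2`, `Λ` real diagonal positive, and `RᴴR = I`, the
frames `X₋` and `X̃₊` of the asymptotic Lagrangian subspaces satisfy
`X₋ᴴ J X̃₊ = [[0, 4(Dᴴ)³],[4D³, 0]]`, which is invertible; hence the corresponding
Lagrangian subspaces intersect trivially. -/
theorem stmt14 (n : ℕ) (R : Matrix (Fin n) (Fin n) ℂ) (hR : Rᴴ * R = 1)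
    (l : Fin n → ℝ) (hl : ∀ i, 0 < l i)
    (ζ : ℂ) (hζ : ζ = -((1 + Complex.I) / Real.sqrt 2))
    (D : Matrix (Fin n) (Fin n) ℂ)
    (hD : D = ζ • Matrix.diagonal fun i => (l i : ℂ))
    (J : Matrix ((Fin n ⊕ Fin n) ⊕ (Fin n ⊕ Fin n)) ((Fin n ⊕ Fin n) ⊕ (Fin n ⊕ Fin n)) ℂ)
    (hJ : J = Matrix.fromBlocks 0 (-1) 1 0)
    (Xm Xp : Matrix ((Fin n ⊕ Fin n) ⊕ (Fin n ⊕ Fin n)) (Fin n ⊕ Fin n) ℂ)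
    (hXm : Xm = Matrix.fromRows
      (Matrix.fromRows (Matrix.fromCols R R)
        (Matrix.fromCols (R * D ^ 2) (R * (Dᴴ) ^ 2)))
      (Matrix.fromRows (Matrix.fromCols (R * D ^ 3) (R * (Dᴴ) ^ 3))
        (Matrix.fromCols (R * D) (R * Dᴴ))))
    (hXp : Xp = Matrix.fromRows
      (Matrix.fromRows (Matrix.fromCols R R)
        (Matrix.fromCols (R * D ^ 2) (R * (Dᴴ) ^ 2)))
      (Matrix.fromRows (Matrix.fromCols (-(R * D ^ 3)) (-(R * (Dᴴ) ^ 3)))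
        (Matrix.fromCols (-(R * D)) (-(R * Dᴴ))))) :
    Xmᴴ * J * Xp = Matrix.fromBlocks 0 ((4 : ℂ) • (Dᴴ) ^ 3) ((4 : ℂ) • D ^ 3) 0 ∧
    IsUnit (Xmᴴ * J * Xp) ∧
    LinearMap.range Xm.mulVecLin ⊓ LinearMap.range Xp.mulVecLin = ⊥ := by
  open AsymptoticFrame in
  have hζI : ζ ^ 2 = Complex.I := hζ ▸ neg_one_add_I_div_sqrt_two_sq
  have hζ0 : ζ ≠ 0 := fun h => Complex.I_ne_zero (by rw [← hζI, h, zero_pow two_ne_zero])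
  have hDsq : D ^ 2 + Dᴴ ^ 2 = 0 := hD ▸ smul_sq_add_conjTranspose_smul_sq_eq_zero
    (isHermitian_diagonal_of_self_adjoint _ (by ext; simp)) (by simp [hζI])
  have hDunit : IsUnit D :=
    hD ▸ isUnit_smul_diagonal hζ0 fun i => Complex.ofReal_ne_zero.2 (hl i).ne'
  have hXm' : Xm = fromRows (top R D) (bottom R D) := hXm
  have hXp' : Xp = fromRows (top R D) (-bottom R D) := by
    rw [hXp, bottom, fromRows_neg, fromCols_neg, fromCols_neg]
    rfl
  have hpair : Xmᴴ * J * Xp = fromBlocks 0 ((4 : ℂ) • Dᴴ ^ 3) ((4 : ℂ) • D ^ 3) 0 := by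
    rw [hXm', hXp', hJ]
    exact conjTranspose_mul_symplectic_mul_reflect hR hDsq
  have hunit : IsUnit (Xmᴴ * J * Xp) := hpair ▸ isUnit_fromBlocks_zero_zero
    (((isUnit_conjTranspose D).2 hDunit).pow 3 |>.smul (Units.mk0 (4 : ℂ) (by norm_num)))
    ((hDunit.pow 3).smul (Units.mk0 (4 : ℂ) (by norm_num)))
  refine ⟨hpair, hunit, range_mulVecLin_inf_eq_bot_of_mul_eq_zero ?_ hunit⟩
  rw [hXm', hJ]
  exact conjTranspose_mul_symplectic_mul_self hR hDsq
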